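/- (Transfer of rapid-decay type estimates from untwisted to twisted convolution.) Let Γ be a group, S ⊆ Γ a subset and C > 0. Assume that for every finitely supported function a : Γ → ℂ with support contained in S and every finitely supported function b : Γ → ℂ one has ‖a * b‖₂ ≤ C · ‖a‖₂ · ‖b‖₂, where * is untwisted convolution. Then for every function σ : Γ → Γ → ℂ with |σ(x,y)| = 1 for all x, y ∈ Γ, every finitely supported a : Γ → ℂ with support contained in S, and every finitely supported b : Γ → ℂ, one has ‖a *_σ b‖₂ ≤ C · ‖a‖₂ · ‖b‖₂. Equivalently, if the operator norm of left convolution by a on ℓ²(Γ) is at most C‖a‖₂ for all a supported in S, then the operator norm of left twisted convolution by a on ℓ²(Γ) is at most C‖a‖₂ for all such a. -/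

import Mathlib

/-- Twisted convolution of finitely supported functions on a group, with respect to a
2-cochain `σ`: `(a *_σ b) g = ∑_{x y = g} σ x y * a x * b y`.  Taking `σ ≡ 1` recovers the
untwisted convolution, i.e. the product of the group algebra `MonoidAlgebra`. -/
noncomputable def twistedConv {G : Type*} [Group G] {R : Type*} [Semiring R]
    (σ : G → G → R) (a b : G →₀ R) : G →₀ R :=
  a.sum fun x ax => b.sum fun y sy => Finsupp.single (x * y) (σ x y * ax * sy)

/-- The pointwise absolute value `|a| : g ↦ |a g|` of a finitely supported
complex-valued function. -/
noncomputable def finsuppAbs {G : Type*} (a : G →₀ ℂ) : G →₀ ℝ :=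
  a.mapRange (fun z : ℂ => ‖z‖) (by simp)

/-- The ℓ²-norm `‖c‖₂ = (∑ g, ‖c g‖²)^(1/2)` of a finitely supported function. -/
noncomputable def l2norm {G : Type*} {E : Type*} [NormedField E] (c : G →₀ E) : ℝ :=
  Real.sqrt (∑ g ∈ c.support, ‖c g‖ ^ 2)

open Classical in
lemma tc_apply {G : Type*} [Group G] (σ : G → G → ℂ) (a b : G →₀ ℂ) (g : G) :
    (twistedConv σ a b) g
      = ∑ x ∈ a.support, ∑ y ∈ b.support, if x * y = g then σ x y * a x * b y else 0 := by
  rw [twistedConv, Finsupp.sum, Finsupp.finset_sum_apply]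
  refine Finset.sum_congr rfl fun x _ => ?_
  rw [Finsupp.sum, Finsupp.finset_sum_apply]
  exact Finset.sum_congr rfl fun y _ => Finsupp.single_apply

lemma l2norm_mono {G : Type*} (c d : G →₀ ℂ) (h : ∀ g, ‖c g‖ ≤ ‖d g‖) :
    l2norm c ≤ l2norm d := by
  classical
  apply Real.sqrt_le_sqrt
  calc ∑ g ∈ c.support, ‖c g‖ ^ 2
      ≤ ∑ g ∈ c.support ∪ d.support, ‖d g‖ ^ 2 := by
        refine (Finset.sum_le_sum fun g _ => ?_).trans
          (Finset.sum_le_sum_of_subset_of_nonneg Finset.subset_union_left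
            fun _ _ _ => by positivity)
        exact pow_le_pow_left₀ (norm_nonneg _) (h g) 2
    _ = ∑ g ∈ d.support, ‖d g‖ ^ 2 := by
        refine (Finset.sum_subset Finset.subset_union_right fun g _ hg => ?_).symm
        simp [Finsupp.notMem_support_iff.mp hg]

/-- Complex-valued pointwise absolute value. -/
noncomputable def absC {G : Type*} (a : G →₀ ℂ) : G →₀ ℂ :=
  a.mapRange (fun z => ((‖z‖ : ℝ) : ℂ)) (by simp)

lemma absC_support {G : Type*} (a : G →₀ ℂ) : (absC a).support = a.support := by
  ext g
  simp [absC, Finsupp.mem_support_iff, Complex.ext_iff]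

lemma absC_l2norm {G : Type*} (a : G →₀ ℂ) : l2norm (absC a) = l2norm a := by
  unfold l2norm
  rw [absC_support]
  congr 1
  refine Finset.sum_congr rfl fun g _ => ?_
  simp [absC, Complex.norm_of_nonneg]

/-- Transfer of rapid-decay type estimates from untwisted to twisted convolution:
if `‖a * b‖₂ ≤ C * ‖a‖₂ * ‖b‖₂` for all finitely supported `a` supported in `S` and all
finitely supported `b` (untwisted convolution), then the same estimate holds for the
twisted convolution `a *_σ b` for every unimodular 2-cochain `σ`. -/
theorem twisted_RD_transfer {G : Type*} [Group G] (S : Set G) (C : ℝ) (hC : 0 < C)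
    (huntwisted : ∀ a : G →₀ ℂ, ↑a.support ⊆ S → ∀ b : G →₀ ℂ,
      l2norm (twistedConv (fun _ _ => (1 : ℂ)) a b) ≤ C * l2norm a * l2norm b) :
    ∀ σ : G → G → ℂ, (∀ x y, ‖σ x y‖ = 1) →
      ∀ a : G →₀ ℂ, ↑a.support ⊆ S → ∀ b : G →₀ ℂ,
        l2norm (twistedConv σ a b) ≤ C * l2norm a * l2norm b := by
  classical
  intro σ hσ a ha b
  have key : l2norm (twistedConv σ a b)
      ≤ l2norm (twistedConv (fun _ _ => (1 : ℂ)) (absC a) (absC b)) := by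
    apply l2norm_mono
    intro g
    set T : ℝ := ∑ x ∈ a.support, ∑ y ∈ b.support,
      if x * y = g then ‖a x‖ * ‖b y‖ else 0 with hT
    have hTnn : 0 ≤ T := by
      apply Finset.sum_nonneg; intro x _; apply Finset.sum_nonneg; intro y _
      positivity
    have hrhs : (twistedConv (fun _ _ => (1 : ℂ)) (absC a) (absC b)) g = (T : ℂ) := by
      rw [tc_apply, hT]
      push_cast
      rw [absC_support, absC_support]
      refine Finset.sum_congr rfl fun x _ => Finset.sum_congr rfl fun y _ => ?_
      simp only [absC, Finsupp.mapRange_apply, apply_ite (Complex.ofReal)]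
      split <;> simp [mul_comm]
    have hlhs : ‖(twistedConv σ a b) g‖ ≤ T := by
      rw [tc_apply, hT]
      refine (norm_sum_le _ _).trans (Finset.sum_le_sum fun x _ => ?_)
      refine (norm_sum_le _ _).trans (Finset.sum_le_sum fun y _ => ?_)
      split
      · simp [map_mul, hσ]
      · simp
    rw [hrhs]
    simpa [abs_of_nonneg hTnn] using hlhs
  refine key.trans ?_
  have := huntwisted (absC a) (by rw [absC_support]; exact ha) (absC b)
  rwa [absC_l2norm, absC_l2norm] at this
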